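/- arXiv:2504.08681 — 6 statements merged into one kernel-verified Lean document; each statement's English description precedes it below -/
import Mathlib

section
/- For r ≥ 1, the map a ↦ (E[min_{1≤i≤n} ‖X - a_i‖^r])^{1/r} from E^n to ℝ is Lipschitz continuous with Lipschitz constant 1 with respect to the max-norm ‖(x_1,...,x_n)‖ = max_i ‖x_i‖ on E^n. -/
open MeasureTheory

/-! For every sample point `x`, the distance `min_i ‖x - a_i‖` from `x` to the nearest of the
points `a_i` moves by at most `max_i ‖a_i - b_i‖` when the `a_i` are replaced by the `b_i`.
The quantity in question is the `Lʳ` norm of this distance function, and on a probability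
space Minkowski's inequality makes the `Lʳ` norm 1-Lipschitz for the uniform distance. -/

theorem abs_ciInf_sub_ciInf_le {ι : Type*} [Finite ι] {f g : ι → ℝ} {c : ℝ} (hc : 0 ≤ c)
    (h : ∀ i, |f i - g i| ≤ c) : |(⨅ i, f i) - ⨅ i, g i| ≤ c := by
  cases isEmpty_or_nonempty ι
  · simpa [Real.iInf_of_isEmpty] using hc
  have iInf_sub_le (f g : ι → ℝ) (h : ∀ i, |f i - g i| ≤ c) : (⨅ i, f i) - c ≤ ⨅ i, g i :=
    le_ciInf fun i => by
      linarith [ciInf_le (Set.finite_range f).bddBelow i, (abs_le.1 (h i)).2]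
  rw [abs_sub_le_iff]
  constructor
  · linarith [iInf_sub_le f g h]
  · linarith [iInf_sub_le g f fun i => abs_sub_comm (g i) (f i) ▸ h i]

theorem abs_iInf_norm_sub_sub_iInf_norm_sub_le {E ι : Type*} [SeminormedAddCommGroup E]
    [Finite ι] (x : E) (a b : ι → E) :
    |(⨅ i, ‖x - a i‖) - ⨅ i, ‖x - b i‖| ≤ ⨆ i, ‖a i - b i‖ :=
  abs_ciInf_sub_ciInf_le (Real.iSup_nonneg fun i => norm_nonneg _) fun i =>
    calc |‖x - a i‖ - ‖x - b i‖| ≤ ‖(x - a i) - (x - b i)‖ := abs_norm_sub_norm_le _ _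
      _ = ‖a i - b i‖ := by rw [sub_sub_sub_cancel_left, norm_sub_rev]
      _ ≤ ⨆ j, ‖a j - b j‖ := le_ciSup (f := fun j => ‖a j - b j‖) (Set.finite_range _).bddAbove i

section lpNorm

variable {Ω : Type*} [MeasurableSpace Ω] {μ : Measure Ω}

theorem lpNorm_ofReal_eq_integral_rpow_inv {f : Ω → ℝ} (hf : AEStronglyMeasurable f μ)
    (hf₀ : ∀ ω, 0 ≤ f ω) {r : ℝ} (hr : 0 < r) :
    lpNorm f (ENNReal.ofReal r) μ = (∫ ω, f ω ^ r ∂μ) ^ r⁻¹ := by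
  rw [lpNorm_eq_integral_norm_rpow_toReal (by simpa using hr) ENNReal.ofReal_ne_top hf,
    ENNReal.toReal_ofReal hr.le]
  simp_rw [Real.norm_of_nonneg (hf₀ _)]

theorem abs_lpNorm_sub_lpNorm_le_of_ae_norm_sub_le [IsProbabilityMeasure μ]
    {F : Type*} [NormedAddCommGroup F] {p : ENNReal} (hp : 1 ≤ p) {f g : Ω → F}
    (hf : AEStronglyMeasurable f μ) (hg : AEStronglyMeasurable g μ) {c : ℝ}
    (h : ∀ᵐ ω ∂μ, ‖f ω - g ω‖ ≤ c) :
    |lpNorm f p μ - lpNorm g p μ| ≤ c := by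
  have hc : 0 ≤ c := by
    obtain ⟨ω, hω⟩ := h.exists
    exact (norm_nonneg _).trans hω
  have hfg : MemLp (f - g) p μ := .of_bound (hf.sub hg) c h
  have hfg_le : lpNorm (f - g) p μ ≤ c := by
    rw [← toReal_eLpNorm hfg.aestronglyMeasurable]
    refine ENNReal.toReal_le_of_le_ofReal hc ((eLpNorm_le_of_ae_bound h).trans ?_)
    simp
  by_cases hgp : MemLp g p μ
  · have hfp : MemLp f p μ := by simpa using hfg.add hgp
    rw [abs_sub_le_iff]
    constructor
    · linarith [lpNorm_le_lpNorm_add_lpNorm_sub' (f := f) hgp hp]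
    · linarith [lpNorm_le_lpNorm_add_lpNorm_sub (f := g) hfp hp]
  · -- off `Lᵖ` both `lpNorm`s take the junk value `0`
    have hfp : ¬MemLp f p μ := fun hfp => hgp (by simpa using hfp.sub hfg)
    simpa [hfp, hgp] using hc

end lpNorm

theorem distortion_rpow_inv_lipschitz_general
    {E : Type*} [NormedAddCommGroup E]
    {Ω : Type*} [MeasurableSpace Ω] (μ : Measure Ω) [IsProbabilityMeasure μ]
    [MeasurableSpace E] [BorelSpace E]
    (X : Ω → E) (hX : Measurable X) (r : ℝ) (hr : 1 ≤ r)
    (n : ℕ) :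
    ∀ a b : Fin n → E,
      |(∫ ω, (⨅ i : Fin n, ‖X ω - a i‖) ^ r ∂μ) ^ r⁻¹ -
        (∫ ω, (⨅ i : Fin n, ‖X ω - b i‖) ^ r ∂μ) ^ r⁻¹|
      ≤ ⨆ i : Fin n, ‖a i - b i‖ := by
  intro a b
  have hdist (u : Fin n → E) : AEStronglyMeasurable (fun ω => ⨅ i, ‖X ω - u i‖) μ :=
    (Measurable.iInf fun i => (continuous_sub_right (u i)).norm.measurable.comp hX)
      |>.aestronglyMeasurable
  have hdist₀ (u : Fin n → E) (ω : Ω) : 0 ≤ ⨅ i, ‖X ω - u i‖ :=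
    Real.iInf_nonneg fun i => norm_nonneg _
  have hr₀ : 0 < r := zero_lt_one.trans_le hr
  rw [← lpNorm_ofReal_eq_integral_rpow_inv (hdist a) (hdist₀ a) hr₀,
    ← lpNorm_ofReal_eq_integral_rpow_inv (hdist b) (hdist₀ b) hr₀]
  refine abs_lpNorm_sub_lpNorm_le_of_ae_norm_sub_le (ENNReal.one_le_ofReal.2 hr) (hdist a)
    (hdist b) (ae_of_all _ fun ω => ?_)
  rw [Real.norm_eq_abs]
  exact abs_iInf_norm_sub_sub_iInf_norm_sub_le (X ω) a b

/-- The `L^r`-quantization error `a ↦ (E[min_i ‖X - a_i‖^r])^{1/r}` is Lipschitz with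
constant 1 for the max-norm on `E^n`. -/
theorem distortion_rpow_inv_lipschitz
    {E : Type*} [NormedAddCommGroup E] [NormedSpace ℝ E] [CompleteSpace E]
    {Ω : Type*} [MeasurableSpace Ω] (μ : Measure Ω) [IsProbabilityMeasure μ]
    [MeasurableSpace E] [BorelSpace E]
    (X : Ω → E) (hX : Measurable X) (r : ℝ) (hr : 1 ≤ r)
    (hint : Integrable (fun ω => ‖X ω‖ ^ r) μ)
    (n : ℕ) (hn : 0 < n) :
    ∀ a b : Fin n → E,
      |(∫ ω, (⨅ i : Fin n, ‖X ω - a i‖) ^ r ∂μ) ^ r⁻¹ -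
        (∫ ω, (⨅ i : Fin n, ‖X ω - b i‖) ^ r ∂μ) ^ r⁻¹|
      ≤ ⨆ i : Fin n, ‖a i - b i‖ :=
  distortion_rpow_inv_lipschitz_general μ X hX r hr n
end

section
/- Let a = (a_1,...,a_n) ∈ E^n be a local minimum of the L^r-distortion function G, with each a_i a non-isolated point of supp(P). Then the components a_1,...,a_n are pairwise distinct. -/
/-!
If two centres coincide, `a i = a j`, then moving `a j` to a point `b` of the support that is
not already a centre never increases the distance to the nearest centre (`a i` still serves the
points `a j` served), and strictly decreases it near `b`. Since `b` lies in the support, the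
distortion strictly drops; and since `a i` is not isolated in the support, `b` can be chosen
arbitrarily close to `a j`, contradicting local minimality.
-/

open MeasureTheory

/-- The support of a Borel measure: points all of whose open neighbourhoods
have positive measure. -/
def measureSupport {E : Type*} [TopologicalSpace E] [MeasurableSpace E]
    (P : Measure E) : Set E :=
  {x : E | ∀ U : Set E, IsOpen U → x ∈ U → 0 < P U}

open Set Function Filter Topology

lemma Real.add_rpow_le_two_rpow_mul_rpow_add_rpow {a b p : ℝ} (ha : 0 ≤ a) (hb : 0 ≤ b)
    (hp : 0 ≤ p) : (a + b) ^ p ≤ 2 ^ p * (a ^ p + b ^ p) := calc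
  (a + b) ^ p ≤ (2 * max a b) ^ p := Real.rpow_le_rpow (by positivity)
    (by rw [two_mul]; exact add_le_add (le_max_left a b) (le_max_right a b)) hp
  _ = 2 ^ p * max a b ^ p := Real.mul_rpow zero_le_two (le_max_of_le_left ha)
  _ = 2 ^ p * max (a ^ p) (b ^ p) := by rw [Real.rpow_max ha hb hp]
  _ ≤ 2 ^ p * (a ^ p + b ^ p) := by
    gcongr; exact max_le_add_of_nonneg (by positivity) (by positivity)

lemma mem_closure_diff_of_mem_closure_diff_singleton {X : Type*} [TopologicalSpace X]
    [T1Space X] {s t : Set X} {x : X} (hx : x ∈ closure (s \ {x})) (ht : t.Finite) :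
    x ∈ closure (s \ t) := by
  have hsub : s \ {x} ⊆ (s \ t) ∪ (t \ {x}) := fun y ⟨hys, hyx⟩ => by
    by_cases hyt : y ∈ t
    exacts [Or.inr ⟨hyt, hyx⟩, Or.inl ⟨hys, hyt⟩]
  have hclosed : IsClosed (t \ {x}) := ht.sdiff.isClosed
  have hx' := closure_mono hsub hx
  rw [closure_union, hclosed.closure_eq] at hx'
  exact hx'.resolve_right fun h => h.2 rfl

lemma integral_lt_integral_of_continuous_of_le_of_lt_of_mem_measureSupport
    {X : Type*} [TopologicalSpace X] [MeasurableSpace X] [OpensMeasurableSpace X]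
    {P : Measure X} {f g : X → ℝ} (hf : Continuous f) (hg : Continuous g)
    (hfi : Integrable f P) (hgi : Integrable g P) (hle : f ≤ g) {x₀ : X} (hlt : f x₀ < g x₀)
    (hx₀ : x₀ ∈ measureSupport P) : ∫ x, f x ∂P < ∫ x, g x ∂P := by
  have hpos : 0 < P {x | f x < g x} := hx₀ _ (isOpen_lt hf hg) hlt
  have : 0 < ∫ x, g x - f x ∂P := by
    refine (integral_pos_iff_support_of_nonneg (sub_nonneg.2 hle) (hgi.sub hfi)).2 ?_
    exact hpos.trans_le (measure_mono fun x hx => (sub_pos.2 hx).ne')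
  rw [integral_sub hgi hfi] at this
  linarith

section Distortion

variable {E ι : Type*} [NormedAddCommGroup E]

lemma continuous_iInf_norm_sub [Finite ι] [Nonempty ι] (c : ι → E) :
    Continuous fun x : E => ⨅ i, ‖x - c i‖ := by
  have := Fintype.ofFinite ι
  simp only [← Finset.inf'_univ_eq_ciInf]
  exact Continuous.finset_inf'_apply _ fun i _ => by fun_prop

lemma iInf_norm_sub_update_le [DecidableEq ι] {c : ι → E} {i j : ι} (hij : i ≠ j)
    (hc : c i = c j) (b x : E) : ⨅ k, ‖x - update c j b k‖ ≤ ⨅ k, ‖x - c k‖ := by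
  have hbdd : BddBelow (range fun k => ‖x - update c j b k‖) :=
    ⟨0, forall_mem_range.2 fun _ => norm_nonneg _⟩
  have : Nonempty ι := ⟨i⟩
  refine le_ciInf fun k => ?_
  rcases eq_or_ne k j with rfl | hk
  · calc ⨅ l, ‖x - update c k b l‖ ≤ ‖x - update c k b i‖ := ciInf_le hbdd i
      _ = ‖x - c k‖ := by rw [update_of_ne hij, hc]
  · calc ⨅ l, ‖x - update c j b l‖ ≤ ‖x - update c j b k‖ := ciInf_le hbdd k
      _ = ‖x - c k‖ := by rw [update_of_ne hk]

lemma continuous_iInf_norm_sub_rpow [Finite ι] [Nonempty ι] {r : ℝ} (hr : 0 ≤ r) (c : ι → E) :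
    Continuous fun x : E => (⨅ i, ‖x - c i‖) ^ r :=
  (continuous_iInf_norm_sub c).rpow_const fun _ => Or.inr hr

variable [MeasurableSpace E]

noncomputable def distortion (P : Measure E) (r : ℝ) (c : ι → E) : ℝ :=
  ∫ x, (⨅ i, ‖x - c i‖) ^ r ∂P

variable [OpensMeasurableSpace E]

lemma integrable_iInf_norm_sub_rpow {P : Measure E} [IsFiniteMeasure P] {r : ℝ} (hr : 0 ≤ r)
    (hint : Integrable (fun x => ‖x‖ ^ r) P) [Finite ι] [Nonempty ι] (c : ι → E) :
    Integrable (fun x => (⨅ i, ‖x - c i‖) ^ r) P := by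
  obtain ⟨k⟩ := ‹Nonempty ι›
  have hmeas : AEStronglyMeasurable (fun x => (⨅ i, ‖x - c i‖) ^ r) P :=
    (continuous_iInf_norm_sub_rpow hr c).aestronglyMeasurable
  refine ((hint.add (integrable_const (‖c k‖ ^ r))).const_mul (2 ^ r)).mono' hmeas
    (ae_of_all _ fun x => ?_)
  have hnn : 0 ≤ ⨅ i, ‖x - c i‖ := Real.iInf_nonneg fun i => norm_nonneg _
  have hbdd : BddBelow (range fun i => ‖x - c i‖) :=
    ⟨0, forall_mem_range.2 fun _ => norm_nonneg _⟩
  rw [Real.norm_of_nonneg (Real.rpow_nonneg hnn r)]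
  calc (⨅ i, ‖x - c i‖) ^ r ≤ (‖x‖ + ‖c k‖) ^ r :=
        Real.rpow_le_rpow hnn ((ciInf_le hbdd k).trans (norm_sub_le x (c k))) hr
    _ ≤ 2 ^ r * (‖x‖ ^ r + ‖c k‖ ^ r) :=
        Real.add_rpow_le_two_rpow_mul_rpow_add_rpow (norm_nonneg _) (norm_nonneg _) hr

theorem distortion_update_lt {P : Measure E} [IsFiniteMeasure P] {r : ℝ} (hr : 0 < r)
    (hint : Integrable (fun x => ‖x‖ ^ r) P) [Finite ι] [DecidableEq ι] {c : ι → E} {i j : ι}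
    (hij : i ≠ j) (hc : c i = c j) {b : E} (hb : b ∈ measureSupport P) (hbc : b ∉ range c) :
    distortion P r (update c j b) < distortion P r c := by
  have : Nonempty ι := ⟨i⟩
  have hnew : ⨅ k, ‖b - update c j b k‖ = 0 :=
    le_antisymm ((ciInf_le ⟨0, forall_mem_range.2 fun _ => norm_nonneg _⟩ j).trans_eq (by simp))
      (Real.iInf_nonneg fun _ => norm_nonneg _)
  have hold : 0 < ⨅ k, ‖b - c k‖ := by
    obtain ⟨k, hk⟩ := exists_eq_ciInf_of_finite (f := fun k => ‖b - c k‖)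
    rw [← hk]
    exact norm_pos_iff.2 (sub_ne_zero.2 fun h => hbc ⟨k, h.symm⟩)
  refine integral_lt_integral_of_continuous_of_le_of_lt_of_mem_measureSupport
    (continuous_iInf_norm_sub_rpow hr.le _) (continuous_iInf_norm_sub_rpow hr.le _)
    (integrable_iInf_norm_sub_rpow hr.le hint _) (integrable_iInf_norm_sub_rpow hr.le hint _)
    (fun x => Real.rpow_le_rpow (Real.iInf_nonneg fun _ => norm_nonneg _)
      (iInf_norm_sub_update_le hij hc b x) hr.le) ?_ hb
  rw [hnew, Real.zero_rpow hr.ne']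
  exact Real.rpow_pos_of_pos hold r

end Distortion

theorem local_min_components_distinct_general
    {E : Type*} [NormedAddCommGroup E] [MeasurableSpace E] [BorelSpace E]
    (P : Measure E) [IsProbabilityMeasure P]
    (r : ℝ) (hr : 0 < r) (hint : Integrable (fun x => ‖x‖ ^ r) P)
    (n : ℕ) (a : Fin n → E)
    (hmin : IsLocalMin (fun b : Fin n → E => ∫ x, (⨅ i, ‖x - b i‖) ^ r ∂P) a)
    (hni : ∀ i, a i ∈ closure (measureSupport P \ {a i})) :
    Function.Injective a := by
  intro i j hij
  by_contra hne
  have hupdate : Tendsto (update a j) (𝓝 (a i)) (𝓝 a) := by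
    simpa only [hij, id, update_eq_self] using
      ((continuous_const : Continuous fun _ : E => a).update j continuous_id).tendsto (a i)
  have hfreq : ∃ᶠ b in 𝓝 (a i), b ∈ measureSupport P \ range a :=
    mem_closure_iff_frequently.1
      (mem_closure_diff_of_mem_closure_diff_singleton (hni i) (finite_range a))
  obtain ⟨b, hba, hbS, hbrange⟩ := ((hupdate.eventually hmin).and_frequently hfreq).exists
  exact (distortion_update_lt hr hint hne hij hbS hbrange).not_ge hba

/-- The components of a local minimum of the `L^r`-distortion whose entries are
non-isolated points of `supp(P)` are pairwise distinct. -/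
theorem local_min_components_distinct
    {E : Type*} [NormedAddCommGroup E] [NormedSpace ℝ E] [CompleteSpace E]
    [SecondCountableTopology E] [MeasurableSpace E] [BorelSpace E]
    (P : Measure E) [IsProbabilityMeasure P]
    (r : ℝ) (hr : 0 < r) (hint : Integrable (fun x => ‖x‖ ^ r) P)
    (n : ℕ) (hn : 0 < n) (a : Fin n → E)
    (hmin : IsLocalMin (fun b : Fin n → E => ∫ x, (⨅ i, ‖x - b i‖) ^ r ∂P) a)
    (hni : ∀ i, a i ∈ closure (measureSupport P \ {a i})) :
    Function.Injective a :=
  local_min_components_distinct_general P r hr hint n a hmin hni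
end

section
/- Let Γ ⊂ E be a finite quantizer, c ∈ E \ Γ, and Γ₁ = Γ ∪ {c}. If P(W_c(Γ₁)) > 0, where W_c(Γ₁) is the open Voronoi cell of c induced by Γ₁, then ∫ d(x, Γ₁)^r dP(x) < ∫ d(x, Γ)^r dP(x) for every r ∈ (0,∞). -/
/-!
Enlarging the codebook can only decrease `d(x, ·)`, so the integrand for `Γ ∪ {c}` is pointwise
at most the one for `Γ`; on the Voronoi cell `W_c` the new point is strictly closer than all of
`Γ`, so the inequality is strict on a set of positive measure. Both integrals are finite because
`d(x, Γ) ≤ ‖x‖ + ‖a‖` for any `a ∈ Γ`, and `L^r` is stable under sums for every `r > 0`.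
-/

open MeasureTheory Metric

lemma integral_lt_integral_of_le_of_lt_on_pos_measure {α : Type*} [MeasurableSpace α]
    {μ : Measure α} {f g : α → ℝ} (hf : Integrable f μ) (hg : Integrable g μ) (hfg : f ≤ g)
    {s : Set α} (hs : 0 < μ s) (hlt : ∀ x ∈ s, f x < g x) :
    ∫ x, f x ∂μ < ∫ x, g x ∂μ := by
  have hsupp : s ⊆ Function.support fun x => g x - f x := fun x hx => (sub_pos.2 (hlt x hx)).ne'
  have hpos : 0 < ∫ x, g x - f x ∂μ := by
    rw [integral_pos_iff_support_of_nonneg (fun x => sub_nonneg.2 (hfg x)) (hg.sub hf)]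
    exact hs.trans_le (measure_mono hsupp)
  rw [integral_sub hg hf] at hpos
  linarith

lemma integrable_infDist_rpow {E : Type*} [SeminormedAddCommGroup E] [MeasurableSpace E]
    [OpensMeasurableSpace E] {P : Measure E} [IsFiniteMeasure P] {r : ℝ} (hr : 0 < r)
    (hint : Integrable (fun x => ‖x‖ ^ r) P) {S : Set E} (hS : S.Nonempty) :
    Integrable (fun x => infDist x S ^ r) P := by
  obtain ⟨a, ha⟩ := hS
  have hp : (ENNReal.ofReal r).toReal = r := ENNReal.toReal_ofReal hr.le
  have hp0 : ENNReal.ofReal r ≠ 0 := by simpa using hr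
  have hnorm : MemLp (fun x : E => ‖x‖) (ENNReal.ofReal r) P := by
    rw [← integrable_norm_rpow_iff continuous_norm.aestronglyMeasurable hp0 ENNReal.ofReal_ne_top,
      hp]
    simpa only [norm_norm] using hint
  have hdist : MemLp (fun x => infDist x S) (ENNReal.ofReal r) P := by
    refine (hnorm.add (memLp_const ‖a‖)).of_le (continuous_infDist_pt S).aestronglyMeasurable
      (ae_of_all _ fun x => ?_)
    rw [Real.norm_of_nonneg infDist_nonneg, Pi.add_apply, Real.norm_of_nonneg (by positivity)]
    calc infDist x S ≤ dist x a := infDist_le_dist_of_mem ha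
      _ ≤ ‖x‖ + ‖a‖ := by rw [dist_eq_norm]; exact norm_sub_le x a
  simpa only [hp, Real.norm_of_nonneg infDist_nonneg] using
    hdist.integrable_norm_rpow hp0 ENNReal.ofReal_ne_top

theorem distortion_strict_decrease_of_added_point_general
    {E : Type*} [NormedAddCommGroup E]
    [MeasurableSpace E] [BorelSpace E]
    (P : Measure E) [IsProbabilityMeasure P]
    (r : ℝ) (hr : 0 < r) (hint : Integrable (fun x => ‖x‖ ^ r) P)
    (Γ : Set E) (hne : Γ.Nonempty)
    (c : E)
    (hW : 0 < P {x : E | ‖x - c‖ < infDist x Γ}) :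
    ∫ x, (infDist x (Γ ∪ {c})) ^ r ∂P < ∫ x, (infDist x Γ) ^ r ∂P := by
  refine integral_lt_integral_of_le_of_lt_on_pos_measure
    (integrable_infDist_rpow hr hint (hne.mono Set.subset_union_left))
    (integrable_infDist_rpow hr hint hne) (fun x => ?_) hW fun x hx => ?_
  · exact Real.rpow_le_rpow infDist_nonneg
      (infDist_le_infDist_of_subset Set.subset_union_left hne) hr.le
  · have hcell : infDist x (Γ ∪ {c}) < infDist x Γ := calc
      infDist x (Γ ∪ {c}) ≤ dist x c := infDist_le_dist_of_mem (Set.mem_union_right Γ rfl)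
      _ = ‖x - c‖ := dist_eq_norm x c
      _ < infDist x Γ := hx
    exact Real.rpow_lt_rpow infDist_nonneg hcell hr

/-- Adding to a finite quantizer `Γ` a point `c ∉ Γ` whose open Voronoi cell in
`Γ ∪ {c}` has positive `P`-measure strictly decreases the `L^r`-distortion. -/
theorem distortion_strict_decrease_of_added_point
    {E : Type*} [NormedAddCommGroup E] [NormedSpace ℝ E] [CompleteSpace E]
    [MeasurableSpace E] [BorelSpace E]
    (P : Measure E) [IsProbabilityMeasure P]
    (r : ℝ) (hr : 0 < r) (hint : Integrable (fun x => ‖x‖ ^ r) P)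
    (Γ : Set E) (hΓ : Γ.Finite) (hne : Γ.Nonempty)
    (c : E) (hc : c ∉ Γ)
    (hW : 0 < P {x : E | ‖x - c‖ < infDist x Γ}) :
    ∫ x, (infDist x (Γ ∪ {c})) ^ r ∂P < ∫ x, (infDist x Γ) ^ r ∂P :=
  distortion_strict_decrease_of_added_point_general P r hr hint Γ hne c hW
end

section
/- Let E be a real Hilbert space, K ⊂ E nonempty closed convex, a ∉ K, b the projection of a onto K, and y_s = s b + (1-s) a for s ∈ (0,1]. Then for every r ∈ (0,∞) and every probability measure P supported in K with ∫‖x‖^r dP < ∞, one has ∫ ‖y_s - x‖^r dP(x) ≤ ∫ ‖a - x‖^r dP(x), with strict inequality if P(K) = 1 and P is nonzero. -/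
/-!
For `x` in the half-space `⟪a - b, x - b⟫ ≤ 0`, which contains `K`, one has
`⟪a - x, a - b⟫ ≥ ‖a - b‖²`, so expanding `y_s - x = (a - x) - s • (a - b)` gives
`‖y_s - x‖² ≤ ‖a - x‖² - s (2 - s) ‖a - b‖² < ‖a - x‖²`. Raising to the power `r` and
integrating against `P`, which is concentrated on that half-space, gives the strict inequality.
-/

open MeasureTheory

section Integrability

variable {E : Type*} [NormedAddCommGroup E]

lemma rpow_norm_sub_le (c x : E) {r : ℝ} (hr : 0 ≤ r) :
    ‖c - x‖ ^ r ≤ 2 ^ r * (‖c‖ ^ r + ‖x‖ ^ r) := by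
  have hmax : ‖c - x‖ ≤ 2 * max ‖c‖ ‖x‖ := by
    linarith [norm_sub_le c x, le_max_left ‖c‖ ‖x‖, le_max_right ‖c‖ ‖x‖]
  calc ‖c - x‖ ^ r ≤ (2 * max ‖c‖ ‖x‖) ^ r := by gcongr
    _ = 2 ^ r * max (‖c‖ ^ r) (‖x‖ ^ r) := by
      rw [Real.mul_rpow zero_le_two (by positivity), Real.rpow_max (by positivity)
        (by positivity) hr]
    _ ≤ 2 ^ r * (‖c‖ ^ r + ‖x‖ ^ r) := by
      gcongr
      exact max_le_add_of_nonneg (by positivity) (by positivity)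

lemma integrable_rpow_norm_const_sub [MeasurableSpace E] [OpensMeasurableSpace E] {μ : Measure E}
    [IsFiniteMeasure μ] {r : ℝ} (hr : 0 ≤ r) (hint : Integrable (fun x => ‖x‖ ^ r) μ) (c : E) :
    Integrable (fun x => ‖c - x‖ ^ r) μ := by
  have hcont : Continuous fun x : E => ‖c - x‖ ^ r := by fun_prop (disch := exact hr)
  refine (((integrable_const (‖c‖ ^ r)).add hint).const_mul (2 ^ r)).mono'
    hcont.aestronglyMeasurable (Filter.Eventually.of_forall fun x => ?_)
  rw [Real.norm_of_nonneg (by positivity)]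
  exact rpow_norm_sub_le c x hr

end Integrability

lemma integral_lt_integral_of_ae_lt {α : Type*} [MeasurableSpace α] {μ : Measure α} [NeZero μ]
    {f g : α → ℝ} (hf : Integrable f μ) (hg : Integrable g μ) (hlt : ∀ᵐ x ∂μ, f x < g x) :
    ∫ x, f x ∂μ < ∫ x, g x ∂μ := by
  rw [← sub_pos, ← integral_sub hg hf, integral_pos_iff_support_of_nonneg_ae
    (hlt.mono fun x hx => (sub_pos.2 hx).le) (hg.sub hf)]
  by_contra! hzero
  have hvanish : ∀ᵐ x ∂μ, (g - f) x = 0 := by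
    simpa [Function.support] using measure_eq_zero_iff_ae_notMem.1 (nonpos_iff_eq_zero.1 hzero)
  obtain ⟨x, hx, hlt⟩ := (hvanish.and hlt).exists
  simp only [Pi.sub_apply] at hx
  linarith

lemma norm_convexComb_sub_lt_of_inner_nonpos {E : Type*} [NormedAddCommGroup E]
    [InnerProductSpace ℝ E] {a b x : E} (hab : a ≠ b) (hx : inner ℝ (a - b) (x - b) ≤ (0 : ℝ))
    {s : ℝ} (hs0 : 0 < s) (hs2 : s < 2) :
    ‖(s • b + (1 - s) • a) - x‖ < ‖a - x‖ := by
  have hdecomp : s • b + (1 - s) • a - x = (a - x) - s • (a - b) := by module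
  have hinner : ‖a - b‖ ^ 2 ≤ inner ℝ (a - x) (a - b) := by
    have : a - x = (a - b) - (x - b) := by abel
    rw [this, inner_sub_left, real_inner_self_eq_norm_sq, real_inner_comm]
    linarith
  have hgap : 0 < s * (2 - s) * ‖a - b‖ ^ 2 := by
    have : 0 < ‖a - b‖ := norm_pos_iff.2 (sub_ne_zero.2 hab)
    have : 0 < 2 - s := by linarith
    positivity
  refine lt_of_pow_lt_pow_left₀ 2 (norm_nonneg _) ?_
  rw [hdecomp, norm_sub_sq_real, real_inner_smul_right, norm_smul, mul_pow,
    Real.norm_eq_abs, sq_abs]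
  nlinarith [mul_le_mul_of_nonneg_left hinner hs0.le]

theorem integral_rpow_dist_decrease_towards_projection_general
    {E : Type*} [NormedAddCommGroup E] [InnerProductSpace ℝ E]
    [MeasurableSpace E] [BorelSpace E]
    (K : Set E)
    (a : E) (ha : a ∉ K) (b : E) (hb : b ∈ K)
    (hproj : ∀ x ∈ K, inner ℝ (a - b) (x - b) ≤ (0 : ℝ))
    (s : ℝ) (hs : s ∈ Set.Ioc (0 : ℝ) 1)
    (r : ℝ) (hr : 0 < r)
    (P : Measure E) [IsProbabilityMeasure P] (hPK : P K = 1)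
    (hint : Integrable (fun x => ‖x‖ ^ r) P) :
    (∫ x, ‖(s • b + (1 - s) • a) - x‖ ^ r ∂P) ≤ (∫ x, ‖a - x‖ ^ r ∂P) ∧
    (∫ x, ‖(s • b + (1 - s) • a) - x‖ ^ r ∂P) < ∫ x, ‖a - x‖ ^ r ∂P := by
  have hab : a ≠ b := fun h => ha (h ▸ hb)
  set H := {x : E | inner ℝ (a - b) (x - b) ≤ (0 : ℝ)}
  have hH : IsClosed H := isClosed_le (by fun_prop) continuous_const
  have hae : ∀ᵐ x ∂P, x ∈ H := by
    rw [ae_mem_iff_measure_eq hH.measurableSet.nullMeasurableSet, measure_univ]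
    exact le_antisymm prob_le_one (hPK ▸ measure_mono hproj)
  have hlt : (∫ x, ‖(s • b + (1 - s) • a) - x‖ ^ r ∂P) < ∫ x, ‖a - x‖ ^ r ∂P :=
    integral_lt_integral_of_ae_lt
      (integrable_rpow_norm_const_sub hr.le hint _)
      (integrable_rpow_norm_const_sub hr.le hint _)
      (hae.mono fun x hx => Real.rpow_lt_rpow (norm_nonneg _)
        (norm_convexComb_sub_lt_of_inner_nonpos hab hx hs.1 (by linarith [hs.2])) hr)
  exact ⟨hlt.le, hlt⟩

/-- Moving from `a ∉ K` towards its projection on closed convex `K` does not increase,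
and in fact strictly decreases, the `L^r`-distortion w.r.t. any probability measure
supported in `K`. -/
theorem integral_rpow_dist_decrease_towards_projection
    {E : Type*} [NormedAddCommGroup E] [InnerProductSpace ℝ E] [CompleteSpace E]
    [MeasurableSpace E] [BorelSpace E]
    (K : Set E) (hK : K.Nonempty) (hKc : IsClosed K) (hKconv : Convex ℝ K)
    (a : E) (ha : a ∉ K) (b : E) (hb : b ∈ K)
    (hproj : ∀ x ∈ K, inner ℝ (a - b) (x - b) ≤ (0 : ℝ))
    (s : ℝ) (hs : s ∈ Set.Ioc (0 : ℝ) 1)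
    (r : ℝ) (hr : 0 < r)
    (P : Measure E) [IsProbabilityMeasure P] (hPK : P K = 1)
    (hint : Integrable (fun x => ‖x‖ ^ r) P) :
    (∫ x, ‖(s • b + (1 - s) • a) - x‖ ^ r ∂P) ≤ (∫ x, ‖a - x‖ ^ r ∂P) ∧
    (∫ x, ‖(s • b + (1 - s) • a) - x‖ ^ r ∂P) < ∫ x, ‖a - x‖ ^ r ∂P :=
  integral_rpow_dist_decrease_towards_projection_general K a ha b hb hproj s hs r hr P hPK hint
end

section
/- In E = ℝ with P the uniform distribution on [-1,1] and r ∈ (0,∞), the pair (a_1, a_2) = (0, 3) is a local (but not global) minimizer of the distortion G_{r,2}(a_1,a_2) = ∫ min(|x-a_1|^r, |x-a_2|^r) dP(x); indeed on a neighbourhood of (0,3), G_{r,2}(b_1,b_2) = ∫_{-1}^{1} |x - b_1|^r dx/2 and this is minimized at b_1 = 0. -/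
/-!
Near `(0, 3)` every point of `[-1, 1]` is closer to the first centre than to the second, so
there the distortion only depends on the first centre: it equals
`((1 + b₁) ^ (r + 1) + (1 - b₁) ^ (r + 1)) / (2 (r + 1))`, which by convexity of
`t ↦ t ^ (r + 1)` is smallest at `b₁ = 0`. Moving the idle second centre to `1` strictly lowers
the distortion, since `|x - 1| < |x|` near `x = 1`.
-/

open MeasureTheory Set Filter Topology intervalIntegral

lemma continuous_abs_sub_rpow {r : ℝ} (hr : 0 ≤ r) (c : ℝ) :
    Continuous fun x : ℝ => |x - c| ^ r :=
  (continuous_abs.comp (continuous_id.sub continuous_const)).rpow_const fun _ => Or.inr hr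

lemma integral_abs_sub_rpow {a b c r : ℝ} (hr : 0 ≤ r) (hac : a ≤ c) (hcb : c ≤ b) :
    ∫ x in a..b, |x - c| ^ r = ((c - a) ^ (r + 1) + (b - c) ^ (r + 1)) / (r + 1) := by
  have hint := fun u v => (continuous_abs_sub_rpow hr c).intervalIntegrable (μ := volume) u v
  have hleft : ∫ x in a..c, |x - c| ^ r = ∫ x in a..c, (c - x) ^ r := by
    refine integral_congr fun x hx => ?_
    rw [uIcc_of_le hac] at hx
    simp only [abs_sub_comm x c, abs_of_nonneg (sub_nonneg.2 hx.2)]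
  have hright : ∫ x in c..b, |x - c| ^ r = ∫ x in c..b, (x - c) ^ r := by
    refine integral_congr fun x hx => ?_
    rw [uIcc_of_le hcb] at hx
    simp only [abs_of_nonneg (sub_nonneg.2 hx.1)]
  have hr1 : r + 1 ≠ 0 := by linarith
  rw [← integral_add_adjacent_intervals (hint a c) (hint c b), hleft, hright,
    integral_comp_sub_left (fun x => x ^ r), integral_comp_sub_right (fun x => x ^ r),
    integral_rpow (Or.inl (by linarith)), integral_rpow (Or.inl (by linarith)), sub_self,
    Real.zero_rpow hr1]
  ring

lemma two_le_one_add_rpow_add_one_sub_rpow {p b : ℝ} (hp : 1 ≤ p) (hb : |b| ≤ 1) :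
    2 ≤ (1 + b) ^ p + (1 - b) ^ p := by
  obtain ⟨hb₁, hb₂⟩ := abs_le.1 hb
  have hmid := (convexOn_rpow hp).2 (x := 1 - b) (y := 1 + b)
    (mem_Ici.2 (by linarith)) (mem_Ici.2 (by linarith))
    (by norm_num : (0 : ℝ) ≤ 1 / 2) (by norm_num : (0 : ℝ) ≤ 1 / 2) (by norm_num)
  have hone : (1 / 2 : ℝ) • (1 - b) + (1 / 2 : ℝ) • (1 + b) = 1 := by
    simp only [smul_eq_mul]; ring
  rw [hone] at hmid
  simp only [smul_eq_mul, Real.one_rpow] at hmid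
  linarith

lemma integral_abs_rpow_le_integral_abs_sub_rpow {r b : ℝ} (hr : 0 ≤ r) (hb : |b| ≤ 1) :
    ∫ x in (-1 : ℝ)..1, |x - 0| ^ r ≤ ∫ x in (-1 : ℝ)..1, |x - b| ^ r := by
  obtain ⟨hb₁, hb₂⟩ := abs_le.1 hb
  rw [integral_abs_sub_rpow (a := -1) (b := 1) hr (by norm_num) (by norm_num),
    integral_abs_sub_rpow hr hb₁ hb₂]
  refine div_le_div_of_nonneg_right ?_ (by linarith)
  rw [sub_neg_eq_add, sub_neg_eq_add, add_comm b, zero_add, sub_zero, Real.one_rpow,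
    one_add_one_eq_two]
  exact two_le_one_add_rpow_add_one_sub_rpow (by linarith) hb

lemma abs_sub_le_abs_sub_of_mem_Icc {x b₁ b₂ : ℝ} (hx : x ∈ Icc (-1 : ℝ) 1)
    (hb : |b₁| + 2 ≤ b₂) : |x - b₁| ≤ |x - b₂| :=
  calc |x - b₁| ≤ |x| + |b₁| := abs_sub _ _
    _ ≤ 1 + |b₁| := by gcongr; exact abs_le.2 hx
    _ ≤ b₂ - x := by linarith [hx.2]
    _ ≤ |x - b₂| := by rw [abs_sub_comm]; exact le_abs_self _

lemma integral_min_rpow_eq_left {r b₁ b₂ : ℝ} (hr : 0 ≤ r) (hb : |b₁| + 2 ≤ b₂) :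
    ∫ x in (-1 : ℝ)..1, min (|x - b₁| ^ r) (|x - b₂| ^ r) =
      ∫ x in (-1 : ℝ)..1, |x - b₁| ^ r := by
  refine integral_congr fun x hx => min_eq_left ?_
  rw [uIcc_of_le (by norm_num)] at hx
  exact Real.rpow_le_rpow (abs_nonneg _) (abs_sub_le_abs_sub_of_mem_Icc hx hb) hr

/-- For `P` uniform on `[-1,1]` and any `r ∈ (0,∞)`, the pair `(0, 3)` is a local but
not global minimizer of the level-2 distortion
`G(b₁,b₂) = (1/2)∫_{-1}^1 min(|x-b₁|^r, |x-b₂|^r) dx`. -/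
theorem uniform_local_not_global_min (r : ℝ) (hr : 0 < r) :
    IsLocalMin
      (fun p : ℝ × ℝ =>
        (1 / 2) * ∫ x in (-1 : ℝ)..1, min (|x - p.1| ^ r) (|x - p.2| ^ r))
      ((0 : ℝ), (3 : ℝ)) ∧
    ∃ q : ℝ × ℝ,
      (1 / 2) * (∫ x in (-1 : ℝ)..1, min (|x - q.1| ^ r) (|x - q.2| ^ r)) <
      (1 / 2) * ∫ x in (-1 : ℝ)..1, min (|x - (0 : ℝ)| ^ r) (|x - (3 : ℝ)| ^ r) := by
  have hnhds : {p : ℝ × ℝ | |p.1| < 1 ∧ |p.1| + 2 < p.2} ∈ 𝓝 ((0 : ℝ), (3 : ℝ)) := by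
    refine IsOpen.mem_nhds ?_ (by norm_num)
    exact (isOpen_lt (continuous_abs.comp continuous_fst) continuous_const).inter
      (isOpen_lt ((continuous_abs.comp continuous_fst).add continuous_const) continuous_snd)
  have h03 := integral_min_rpow_eq_left (b₁ := 0) (b₂ := 3) hr.le (by norm_num)
  refine ⟨?_, (0, 1), ?_⟩
  · filter_upwards [hnhds] with p hp
    rw [h03, integral_min_rpow_eq_left hr.le hp.2.le]
    gcongr
    exact integral_abs_rpow_le_integral_abs_sub_rpow hr.le hp.1.le
  · rw [h03]
    gcongr
    refine integral_lt_integral_of_continuousOn_of_le_of_exists_lt (by norm_num)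
      ((continuous_abs_sub_rpow hr.le 0).min (continuous_abs_sub_rpow hr.le 1)).continuousOn
      (continuous_abs_sub_rpow hr.le 0).continuousOn (fun x _ => min_le_left _ _)
      ⟨1, by norm_num, ?_⟩
    norm_num [Real.zero_rpow hr.ne']
end

section
/- Let E be a normed space and Γ = {a_1,...,a_n} with pairwise distinct points. If E is strictly convex (the unit sphere contains no nontrivial line segments) and n = 2, then the set {x ∈ E : ‖x - a_1‖ = ‖x - a_2‖} (the boundary between the two Voronoi cells) has empty interior. -/
/-!
If `x` is equidistant from `a₁ ≠ a₂`, move it a little towards `a₁` to a point `z`. Were `z` still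
equidistant, then `dist x z + dist z a₂ = dist x a₂`, and in a strictly convex space equality in
the triangle inequality forces `z` onto the segment `[x, a₂]` at the same ratio as on `[x, a₁]`,
whence `a₁ = a₂`. So points arbitrarily close to `x` leave the bisector.
-/

open AffineMap Filter Set Topology

theorem StrictConvexSpace.of_norm_midpoint_lt_one {E : Type*} [NormedAddCommGroup E]
    [NormedSpace ℝ E]
    (h : ∀ x y : E, ‖x‖ = 1 → ‖y‖ = 1 → x ≠ y → ‖(2 : ℝ)⁻¹ • (x + y)‖ < 1) :
    StrictConvexSpace ℝ E :=
  .of_norm_combo_lt_one fun x y hx hy hne =>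
    ⟨2⁻¹, 2⁻¹, by norm_num, by simpa only [smul_add] using h x y hx hy hne⟩

def bisector {P : Type*} [MetricSpace P] (a₁ a₂ : P) : Set P := {x | dist x a₁ = dist x a₂}

section StrictConvexSpace

variable {E : Type*} [NormedAddCommGroup E] [NormedSpace ℝ E] [StrictConvexSpace ℝ E]
  {a₁ a₂ x : E} {t : ℝ}

theorem lineMap_notMem_bisector (h : a₁ ≠ a₂) (hx : x ∈ bisector a₁ a₂) (ht₀ : 0 < t)
    (ht₁ : t ≤ 1) : lineMap x a₁ t ∉ bisector a₁ a₂ := by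
  intro hz
  have hx : dist x a₁ = dist x a₂ := hx
  have hz : dist (lineMap x a₁ t) a₁ = dist (lineMap x a₁ t) a₂ := hz
  have hleft : dist x (lineMap x a₁ t) = t * dist x a₂ := by
    rw [dist_left_lineMap, Real.norm_of_nonneg ht₀.le, hx]
  have hright : dist (lineMap x a₁ t) a₂ = (1 - t) * dist x a₂ := by
    rw [← hz, dist_lineMap_right, Real.norm_of_nonneg (sub_nonneg.2 ht₁), hx]
  have hz₂ : lineMap x a₁ t = lineMap x a₂ t :=
    eq_lineMap_of_dist_eq_mul_of_dist_eq_mul hleft hright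
  rw [← homothety_eq_lineMap, ← homothety_eq_lineMap] at hz₂
  exact h (homothety_injective x ht₀.ne' hz₂)

theorem interior_bisector_eq_empty (h : a₁ ≠ a₂) : interior (bisector a₁ a₂) = ∅ := by
  refine eq_empty_iff_forall_notMem.2 fun x hx => ?_
  have hlim : Tendsto (lineMap x a₁ : ℝ → E) (𝓝[>] 0) (𝓝 x) :=
    (lineMap_continuous.tendsto' 0 x (by simp)).mono_left nhdsWithin_le_nhds
  obtain ⟨t, hz, ht⟩ :=
    ((hlim.eventually (mem_interior_iff_mem_nhds.1 hx)).and (Ioc_mem_nhdsGT zero_lt_one)).exists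
  exact lineMap_notMem_bisector h (interior_subset hx) ht.1 ht.2 hz

end StrictConvexSpace

/-- In a strictly convex normed space, the bisector of two distinct points has empty
interior. -/
theorem bisector_empty_interior
    {E : Type*} [NormedAddCommGroup E] [NormedSpace ℝ E]
    (hsc : ∀ x y : E, ‖x‖ = 1 → ‖y‖ = 1 → x ≠ y → ‖(2 : ℝ)⁻¹ • (x + y)‖ < 1)
    (a₁ a₂ : E) (h : a₁ ≠ a₂) :
    interior {x : E | ‖x - a₁‖ = ‖x - a₂‖} = ∅ := by
  have := StrictConvexSpace.of_norm_midpoint_lt_one hsc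
  simpa only [bisector, dist_eq_norm] using interior_bisector_eq_empty h
end
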